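/- Under Assumptions 4.1 (Φ continuous, Φ(u;y) ≥ −M₁(r,‖u‖), |Φ(u;y₁) − Φ(u;y₂)| ≤ M₂(r,‖u‖)‖y₁−y₂‖ for y, y₁, y₂ ∈ B_Y(0,r)), μ₀(X′) = 1, μ₀(X′ ∩ B) > 0 for some bounded B, and exp(M₁(r,‖u‖)) M₂(r,‖u‖)² ∈ L¹_{μ₀}, there exists C = C(r) such that the posteriors satisfy d_Hell(μʸ, μ^{y′}) ≤ C ‖y − y′‖_Y for all y, y′ ∈ B_Y(0,r). -/

import Mathlib

/-!
Write `ρ_y = exp (-Φ(·;y)) / Z(y)` for the posterior density, so that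
`d_Hell(μʸ, μ^{y'}) = ‖√ρ_y - √ρ_{y'}‖_{L²(μ₀)} / √2`, and split
`√ρ_y - √ρ_{y'} = (e^{-Φ(·;y)/2} - e^{-Φ(·;y')/2}) / √Z(y) + e^{-Φ(·;y')/2} (Z(y)^{-1/2} - Z(y')^{-1/2})`.
Since `Φ ≥ -M₁`, the exponential is `e^{M₁}`-Lipschitz on the relevant range, so the square of the
first term is at most `e^{M₁} M₂² ‖y - y'‖² / (4 Z(y))`, integrable by assumption; the second is
controlled by `|Z(y) - Z(y')| ≤ ‖y - y'‖ ∫ e^{M₁} M₂`. Both need `Z` bounded below on the ball: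
some ball `B(0, R)` of `X` has positive `μ₀`-measure and `M₂ ≤ M₂(r, R)` on it, so
`Z(y) ≥ e^{-M₂(r,R) r} ∫_{B(0,R)} e^{-Φ(·;0)} > 0`. Finally `M₂ ≥ M₂(r, 0) > 0` turns the
integrability of `e^{M₁} M₂²` into that of `e^{M₁}` and `e^{M₁} M₂`.
-/

open MeasureTheory

/-- The Hellinger distance between two measures, computed with respect to the common
dominating reference measure `μ + μ'`:
`d_Hell(μ, μ')² = (1/2) ∫ (√(dμ/dν) − √(dμ'/dν))² dν`, `ν = μ + μ'`. -/
noncomputable def hellingerDist {X : Type*} [MeasurableSpace X] (μ μ' : Measure X) : ℝ :=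
  Real.sqrt ((1 / 2) * ∫ u,
    (Real.sqrt ((μ.rnDeriv (μ + μ') u).toReal)
      - Real.sqrt ((μ'.rnDeriv (μ + μ') u).toReal)) ^ 2 ∂(μ + μ'))

open Filter Metric Real
open scoped ENNReal

lemma abs_exp_sub_exp_le_of_le {s t M : ℝ} (hs : s ≤ M) (ht : t ≤ M) :
    |exp s - exp t| ≤ exp M * |s - t| := by
  wlog hts : t ≤ s generalizing s t
  · rw [abs_sub_comm, abs_sub_comm s]
    exact this ht hs (le_of_not_ge hts)
  have hfactor : exp s - exp t = exp s * (1 - exp (t - s)) := by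
    rw [mul_sub, ← exp_add]; ring_nf
  have hlin : 1 - exp (t - s) ≤ s - t := by linarith [add_one_le_exp (t - s)]
  have hnonneg : 0 ≤ 1 - exp (t - s) := sub_nonneg.2 (exp_le_one_iff.2 (by linarith))
  rw [abs_of_nonneg (sub_nonneg.2 (exp_le_exp.2 hts)), abs_of_nonneg (sub_nonneg.2 hts), hfactor]
  exact mul_le_mul (exp_le_exp.2 hs) hlin hnonneg (exp_pos M).le

lemma sq_sqrt_exp_neg_sub_sqrt_exp_neg_le {a b M : ℝ} (ha : -M ≤ a) (hb : -M ≤ b) :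
    (√(exp (-a)) - √(exp (-b))) ^ 2 ≤ exp M * (a - b) ^ 2 / 4 := by
  have h := abs_exp_sub_exp_le_of_le (s := -a / 2) (t := -b / 2) (M := M / 2)
    (by linarith) (by linarith)
  have hexp : exp (M / 2) ^ 2 = exp M := by rw [← exp_nat_mul]; ring_nf
  rw [← exp_half, ← exp_half, ← sq_abs]
  calc |exp (-a / 2) - exp (-b / 2)| ^ 2 ≤ (exp (M / 2) * |-a / 2 - -b / 2|) ^ 2 :=
        pow_le_pow_left₀ (abs_nonneg _) h 2
    _ = exp M * (a - b) ^ 2 / 4 := by rw [mul_pow, sq_abs, hexp]; ring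

lemma sq_one_div_sqrt_sub_one_div_sqrt_le {m z z' : ℝ} (hm : 0 < m) (hz : m ≤ z) (hz' : m ≤ z') :
    (1 / √z - 1 / √z') ^ 2 ≤ (z - z') ^ 2 / (4 * m ^ 3) := by
  have hsz : √m ≤ √z := sqrt_le_sqrt hz
  have hsz' : √m ≤ √z' := sqrt_le_sqrt hz'
  have hsm : 0 < √m := sqrt_pos.2 hm
  have hsz0 : 0 < √z := hsm.trans_le hsz
  have hsz'0 : 0 < √z' := hsm.trans_le hsz'
  have hz2 : √z ^ 2 = z := sq_sqrt (hm.trans_le hz).le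
  have hz'2 : √z' ^ 2 = z' := sq_sqrt (hm.trans_le hz').le
  have hm2 : √m ^ 2 = m := sq_sqrt hm.le
  have hdiff : 1 / √z - 1 / √z' = (z' - z) / (√z * √z' * (√z + √z')) := by
    field_simp
    linear_combination hz'2 - hz2
  have hden : 4 * m ^ 3 ≤ (√z * √z' * (√z + √z')) ^ 2 := by
    have h : √m * √m * (√m + √m) ≤ √z * √z' * (√z + √z') := by gcongr
    calc 4 * m ^ 3 = (√m * √m * (√m + √m)) ^ 2 := by
          rw [show (√m * √m * (√m + √m)) ^ 2 = 4 * (√m ^ 2) ^ 3 by ring, hm2]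
      _ ≤ _ := pow_le_pow_left₀ (by positivity) h 2
  rw [hdiff, div_pow, show (z' - z) ^ 2 = (z - z') ^ 2 by ring]
  exact div_le_div_of_nonneg_left (sq_nonneg _) (by positivity) hden

lemma sq_sqrt_div_sub_sqrt_div_le {x x' z z' m : ℝ} (hx' : 0 ≤ x') (hm : 0 < m) (hz : m ≤ z)
    (hz' : m ≤ z') :
    (√(x / z) - √(x' / z')) ^ 2 ≤ 2 * (√x - √x') ^ 2 / m + x' * (z - z') ^ 2 / (2 * m ^ 3) := by
  have hz0 : 0 < z := hm.trans_le hz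
  have hsplit : √(x / z) - √(x' / z') = (√x - √x') / √z + √x' * (1 / √z - 1 / √z') := by
    rw [sqrt_div' _ hz0.le, sqrt_div' _ (hm.trans_le hz').le]; ring
  have hfirst : ((√x - √x') / √z) ^ 2 ≤ (√x - √x') ^ 2 / m := by
    rw [div_pow, sq_sqrt hz0.le]
    exact div_le_div_of_nonneg_left (sq_nonneg _) hm hz
  have hsecond : (√x' * (1 / √z - 1 / √z')) ^ 2 ≤ x' * ((z - z') ^ 2 / (4 * m ^ 3)) := by
    rw [mul_pow, sq_sqrt hx']
    exact mul_le_mul_of_nonneg_left (sq_one_div_sqrt_sub_one_div_sqrt_le hm hz hz') hx'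
  calc (√(x / z) - √(x' / z')) ^ 2
      ≤ 2 * (((√x - √x') / √z) ^ 2 + (√x' * (1 / √z - 1 / √z')) ^ 2) := hsplit ▸ add_sq_le
    _ ≤ 2 * ((√x - √x') ^ 2 / m + x' * ((z - z') ^ 2 / (4 * m ^ 3))) := by gcongr
    _ = _ := by ring

lemma mul_sq_sqrt_div_add_sub_sqrt_div_add {x x' : ℝ} (hx : 0 ≤ x) (hx' : 0 ≤ x') :
    (x + x') * (√(x / (x + x')) - √(x' / (x + x'))) ^ 2 = (√x - √x') ^ 2 := by
  rcases (add_nonneg hx hx').eq_or_lt with hsum | hsum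
  · obtain ⟨rfl, rfl⟩ : x = 0 ∧ x' = 0 := ⟨by linarith, by linarith⟩
    simp
  · rw [sqrt_div' _ hsum.le, sqrt_div' _ hsum.le, div_sub_div_same, div_pow, sq_sqrt hsum.le,
      mul_div_cancel₀ _ hsum.ne']

section WithDensity

variable {X : Type*} [MeasurableSpace X] {μ : Measure X}

lemma rnDeriv_withDensity_withDensity_of_le {F S : X → ℝ≥0∞} (hF : Measurable F)
    (hS : Measurable S) (hFS : F ≤ S) (hS_top : ∀ x, S x ≠ ∞)
    [SigmaFinite (μ.withDensity S)] :
    (μ.withDensity F).rnDeriv (μ.withDensity S) =ᵐ[μ.withDensity S] F / S := by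
  refine (Measure.eq_rnDeriv (hF.div hS) Measure.MutuallySingular.zero_left ?_).symm
  rw [zero_add, ← withDensity_mul _ hS (hF.div hS)]
  congr 1
  funext x
  by_cases hx : S x = 0
  · simp [nonpos_iff_eq_zero.1 (hx ▸ hFS x), hx]
  · exact (ENNReal.mul_div_cancel hx (hS_top x)).symm

lemma hellingerDist_withDensity_ofReal [SigmaFinite μ] {f g : X → ℝ} (hf : Measurable f)
    (hg : Measurable g) (hf0 : 0 ≤ f) (hg0 : 0 ≤ g) :
    hellingerDist (μ.withDensity fun x => ENNReal.ofReal (f x))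
        (μ.withDensity fun x => ENNReal.ofReal (g x))
      = √((1 / 2) * ∫ x, (√(f x) - √(g x)) ^ 2 ∂μ) := by
  set F : X → ℝ≥0∞ := fun x => ENNReal.ofReal (f x)
  set G : X → ℝ≥0∞ := fun x => ENNReal.ofReal (g x)
  set S : X → ℝ≥0∞ := fun x => ENNReal.ofReal (f x + g x)
  have hS : S = F + G := funext fun x => ENNReal.ofReal_add (hf0 x) (hg0 x)
  have hSm : Measurable S := (hf.add hg).ennreal_ofReal
  have hS_top : ∀ x, S x ≠ ∞ := fun x => ENNReal.ofReal_ne_top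
  have hsum : μ.withDensity F + μ.withDensity G = μ.withDensity S := by
    rw [hS, withDensity_add_left hf.ennreal_ofReal]
  have hrnF := rnDeriv_withDensity_withDensity_of_le hf.ennreal_ofReal hSm
    (hS ▸ le_self_add) hS_top (μ := μ)
  have hrnG := rnDeriv_withDensity_withDensity_of_le hg.ennreal_ofReal hSm
    (hS ▸ le_add_self) hS_top (μ := μ)
  have htoReal : ∀ x (y : ℝ), 0 ≤ y → (ENNReal.ofReal y / S x).toReal = y / (f x + g x) := by
    intro x y hy
    rw [ENNReal.toReal_div, ENNReal.toReal_ofReal hy,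
      ENNReal.toReal_ofReal (add_nonneg (hf0 x) (hg0 x))]
  rw [hellingerDist, hsum]
  congr 2
  calc ∫ x, (√(((μ.withDensity F).rnDeriv (μ.withDensity S) x).toReal)
        - √(((μ.withDensity G).rnDeriv (μ.withDensity S) x).toReal)) ^ 2 ∂μ.withDensity S
      = ∫ x, (√((F x / S x).toReal) - √((G x / S x).toReal)) ^ 2 ∂μ.withDensity S := by
        refine integral_congr_ae ?_
        filter_upwards [hrnF, hrnG] with x hxF hxG
        rw [hxF, hxG, Pi.div_apply, Pi.div_apply]
    _ = ∫ x, (f x + g x).toNNReal • (√((F x / S x).toReal) - √((G x / S x).toReal)) ^ 2 ∂μ :=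
        integral_withDensity_eq_integral_smul (hf.add hg).real_toNNReal _
    _ = ∫ x, (√(f x) - √(g x)) ^ 2 ∂μ := by
        congr 1
        funext x
        rw [NNReal.smul_def, smul_eq_mul, Real.coe_toNNReal _ (add_nonneg (hf0 x) (hg0 x)),
          htoReal x _ (hf0 x), htoReal x _ (hg0 x),
          mul_sq_sqrt_div_add_sub_sqrt_div_add (hf0 x) (hg0 x)]

end WithDensity

/-- `A` need not be measurable, hence the measurability of `{x | p x}`: a set of outer measure one
may have a complement of positive outer measure. -/
lemma ae_of_forall_mem_of_measure_eq_one {X : Type*} [MeasurableSpace X] {μ : Measure X}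
    [IsProbabilityMeasure μ] {A : Set X} (hA : μ A = 1) {p : X → Prop}
    (hp : MeasurableSet {x | p x}) (h : ∀ x ∈ A, p x) : ∀ᵐ x ∂μ, p x :=
  (prob_compl_eq_zero_iff hp).2 (le_antisymm prob_le_one (hA ▸ measure_mono h))

section Potential

variable {X : Type*} [MeasurableSpace X] {μ : Measure X} {f g M W : X → ℝ}

lemma integrable_exp_of_integrable_exp_mul_sq {w₀ : ℝ} (hM : Measurable M) (hw₀ : 0 < w₀)
    (hW : ∀ x, w₀ ≤ W x) (h : Integrable (fun x => exp (M x) * W x ^ 2) μ) :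
    Integrable (fun x => exp (M x)) μ := by
  refine (h.const_mul (w₀ ^ 2)⁻¹).mono' hM.exp.aestronglyMeasurable (Eventually.of_forall ?_)
  intro x
  rw [norm_of_nonneg (exp_pos _).le, le_inv_mul_iff₀ (by positivity)]
  have := pow_le_pow_left₀ hw₀.le (hW x) 2
  nlinarith [exp_pos (M x)]

lemma integrable_exp_mul_of_integrable_exp_mul_sq {w₀ : ℝ} (hM : Measurable M)
    (hWm : Measurable W) (hw₀ : 0 < w₀) (hW : ∀ x, w₀ ≤ W x)
    (h : Integrable (fun x => exp (M x) * W x ^ 2) μ) :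
    Integrable (fun x => exp (M x) * W x) μ := by
  refine (h.const_mul w₀⁻¹).mono' (hM.exp.mul hWm).aestronglyMeasurable (Eventually.of_forall ?_)
  intro x
  have hWx := hw₀.trans_le (hW x)
  rw [norm_of_nonneg (by positivity), le_inv_mul_iff₀ hw₀]
  have := mul_le_mul_of_nonneg_left (hW x) (mul_pos (exp_pos (M x)) hWx).le
  linarith

lemma integrable_exp_neg_of_ae_neg_le (hM : Integrable (fun x => exp (M x)) μ)
    (hf : Measurable f) (h : ∀ᵐ x ∂μ, -M x ≤ f x) : Integrable (fun x => exp (-f x)) μ := by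
  refine hM.mono' hf.neg.exp.aestronglyMeasurable ?_
  filter_upwards [h] with x hx
  rw [norm_of_nonneg (exp_pos _).le]
  exact exp_le_exp.2 (by linarith)

lemma abs_integral_exp_neg_sub_integral_exp_neg_le {V : X → ℝ}
    (hM : Integrable (fun x => exp (M x)) μ) (hMV : Integrable (fun x => exp (M x) * V x) μ)
    (hf : Measurable f) (hg : Measurable g) (hfM : ∀ᵐ x ∂μ, -M x ≤ f x)
    (hgM : ∀ᵐ x ∂μ, -M x ≤ g x) (hfg : ∀ᵐ x ∂μ, |f x - g x| ≤ V x) :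
    |∫ x, exp (-f x) ∂μ - ∫ x, exp (-g x) ∂μ| ≤ ∫ x, exp (M x) * V x ∂μ := by
  have hfi := integrable_exp_neg_of_ae_neg_le hM hf hfM
  have hgi := integrable_exp_neg_of_ae_neg_le hM hg hgM
  rw [← integral_sub hfi hgi]
  refine abs_integral_le_integral_abs.trans (integral_mono_ae (hfi.sub hgi).abs hMV ?_)
  filter_upwards [hfM, hgM, hfg] with x hxf hxg hx
  calc |exp (-f x) - exp (-g x)| ≤ exp (M x) * |-f x - -g x| :=
        abs_exp_sub_exp_le_of_le (by linarith) (by linarith)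
    _ ≤ exp (M x) * V x := by
        rw [neg_sub_neg, abs_sub_comm]
        exact mul_le_mul_of_nonneg_left hx (exp_pos _).le

lemma integral_sq_sqrt_exp_neg_div_sub_le {d m z z' : ℝ}
    (hMW : Integrable (fun x => exp (M x) * W x ^ 2) μ) (hgi : Integrable (fun x => exp (-g x)) μ)
    (hm : 0 < m) (hz : m ≤ z) (hz' : m ≤ z') (hfM : ∀ᵐ x ∂μ, -M x ≤ f x)
    (hgM : ∀ᵐ x ∂μ, -M x ≤ g x) (hfg : ∀ᵐ x ∂μ, |f x - g x| ≤ W x * d) :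
    ∫ x, (√(exp (-f x) / z) - √(exp (-g x) / z')) ^ 2 ∂μ
      ≤ (∫ x, exp (M x) * W x ^ 2 ∂μ) * (d ^ 2 / (2 * m))
        + (∫ x, exp (-g x) ∂μ) * ((z - z') ^ 2 / (2 * m ^ 3)) := by
  rw [← integral_mul_const, ← integral_mul_const,
    ← integral_add (hMW.mul_const _) (hgi.mul_const _)]
  refine integral_mono_of_nonneg (Eventually.of_forall fun x => sq_nonneg _)
    ((hMW.mul_const _).add (hgi.mul_const _)) ?_
  filter_upwards [hfM, hgM, hfg] with x hxf hxg hx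
  have hexp := sq_sqrt_exp_neg_sub_sqrt_exp_neg_le hxf hxg
  have hsq : (f x - g x) ^ 2 ≤ (W x * d) ^ 2 := sq_le_sq' (neg_le_of_abs_le hx) (le_of_abs_le hx)
  calc (√(exp (-f x) / z) - √(exp (-g x) / z')) ^ 2
      ≤ 2 * (√(exp (-f x)) - √(exp (-g x))) ^ 2 / m
        + exp (-g x) * (z - z') ^ 2 / (2 * m ^ 3) :=
        sq_sqrt_div_sub_sqrt_div_le (exp_pos _).le hm hz hz'
    _ ≤ 2 * (exp (M x) * (W x * d) ^ 2 / 4) / m + exp (-g x) * (z - z') ^ 2 / (2 * m ^ 3) := by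
        gcongr
        exact hexp.trans (by gcongr)
    _ = _ := by ring

end Potential

section Posterior

variable {X Y : Type*} [MeasurableSpace X] {μ : Measure X}
  {Φ : X → Y → ℝ} {s : Set Y}

noncomputable def bayesPosterior (μ : Measure X) (Φ : X → Y → ℝ) (y : Y) : Measure X :=
  μ.withDensity fun u => ENNReal.ofReal (exp (-Φ u y) / ∫ v, exp (-Φ v y) ∂μ)

lemma hellingerDist_bayesPosterior [SigmaFinite μ] (hΦ : ∀ y, Measurable fun u => Φ u y)
    (y y' : Y) :
    hellingerDist (bayesPosterior μ Φ y) (bayesPosterior μ Φ y')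
      = √((1 / 2) * ∫ u, (√(exp (-Φ u y) / ∫ v, exp (-Φ v y) ∂μ)
          - √(exp (-Φ u y') / ∫ v, exp (-Φ v y') ∂μ)) ^ 2 ∂μ) :=
  hellingerDist_withDensity_ofReal ((hΦ y).neg.exp.div_const _) ((hΦ y').neg.exp.div_const _)
    (fun _ => div_nonneg (exp_pos _).le (integral_nonneg fun _ => (exp_pos _).le))
    (fun _ => div_nonneg (exp_pos _).le (integral_nonneg fun _ => (exp_pos _).le))

lemma exists_pos_forall_le_integral_exp_neg [NormedAddCommGroup Y] {W : X → ℝ} {T : Set X}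
    {y₀ : Y} {ρ c : ℝ} (hT : MeasurableSet T) (hμT : 0 < μ T)
    (hint : ∀ y ∈ s, Integrable (fun u => exp (-Φ u y)) μ) (hy₀ : y₀ ∈ s)
    (hs : s ⊆ closedBall y₀ ρ) (hc : 0 ≤ c) (hWT : ∀ u ∈ T, W u ≤ c)
    (hlip : ∀ y ∈ s, ∀ y' ∈ s, ∀ᵐ u ∂μ, |Φ u y - Φ u y'| ≤ W u * ‖y - y'‖) :
    ∃ m > 0, ∀ y ∈ s, m ≤ ∫ u, exp (-Φ u y) ∂μ := by
  have : NeZero (μ.restrict T) := ⟨by simpa [Measure.restrict_eq_zero] using hμT.ne'⟩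
  refine ⟨exp (-(c * ρ)) * ∫ u in T, exp (-Φ u y₀) ∂μ,
    mul_pos (exp_pos _) (integral_exp_pos (hint y₀ hy₀).integrableOn), fun y hy => ?_⟩
  rw [← integral_const_mul]
  calc ∫ u in T, exp (-(c * ρ)) * exp (-Φ u y₀) ∂μ ≤ ∫ u in T, exp (-Φ u y) ∂μ := by
        refine setIntegral_mono_on_ae ((hint y₀ hy₀).integrableOn.const_mul _)
          (hint y hy).integrableOn hT ?_
        filter_upwards [hlip y hy y₀ hy₀] with u hu huT
        have hdist : ‖y - y₀‖ ≤ ρ := by simpa [dist_eq_norm] using hs hy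
        have : W u * ‖y - y₀‖ ≤ c * ρ := (mul_le_mul_of_nonneg_right (hWT u huT)
          (norm_nonneg _)).trans (mul_le_mul_of_nonneg_left hdist hc)
        rw [← exp_add]
        exact exp_le_exp.2 (by linarith [le_abs_self (Φ u y - Φ u y₀)])
    _ ≤ ∫ u, exp (-Φ u y) ∂μ :=
        setIntegral_le_integral (hint y hy) (Eventually.of_forall fun _ => (exp_pos _).le)

theorem exists_hellingerDist_bayesPosterior_le [NormedAddCommGroup Y] [SigmaFinite μ]
    {M W : X → ℝ} {m : ℝ}
    (hΦ : ∀ y, Measurable fun u => Φ u y) (hM : Integrable (fun u => exp (M u)) μ)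
    (hMW : Integrable (fun u => exp (M u) * W u) μ)
    (hMW2 : Integrable (fun u => exp (M u) * W u ^ 2) μ)
    (hm : 0 < m) (hZ : ∀ y ∈ s, m ≤ ∫ u, exp (-Φ u y) ∂μ)
    (hlb : ∀ y ∈ s, ∀ᵐ u ∂μ, -M u ≤ Φ u y)
    (hlip : ∀ y ∈ s, ∀ y' ∈ s, ∀ᵐ u ∂μ, |Φ u y - Φ u y'| ≤ W u * ‖y - y'‖) :
    ∃ C > 0, ∀ y ∈ s, ∀ y' ∈ s,
      hellingerDist (bayesPosterior μ Φ y) (bayesPosterior μ Φ y') ≤ C * ‖y - y'‖ := by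
  set Z : Y → ℝ := fun y => ∫ u, exp (-Φ u y) ∂μ
  set K := ∫ u, exp (M u) ∂μ
  set L := ∫ u, exp (M u) * W u ∂μ
  set I := ∫ u, exp (M u) * W u ^ 2 ∂μ
  set A := I / (2 * m) + K * L ^ 2 / (2 * m ^ 3)
  have hA : 0 ≤ A := by
    have : 0 ≤ K := integral_nonneg fun _ => (exp_pos _).le
    have : 0 ≤ I := integral_nonneg fun _ => by positivity
    positivity
  refine ⟨√(A / 2) + 1, by positivity, fun y hy y' hy' => ?_⟩
  set d := ‖y - y'‖
  have hint : ∀ y ∈ s, Integrable (fun u => exp (-Φ u y)) μ := fun y hy =>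
    integrable_exp_neg_of_ae_neg_le hM (hΦ y) (hlb y hy)
  have hZK : Z y' ≤ K := integral_mono_ae (hint y' hy') hM <| by
    filter_upwards [hlb y' hy'] with u hu using exp_le_exp.2 (by linarith)
  have hZL : |Z y - Z y'| ≤ L * d := by
    have hMWd : Integrable (fun u => exp (M u) * (W u * d)) μ := by
      simpa only [mul_assoc] using hMW.mul_const d
    rw [← integral_mul_const]
    simp_rw [mul_assoc]
    exact abs_integral_exp_neg_sub_integral_exp_neg_le hM hMWd (hΦ y) (hΦ y') (hlb y hy)
      (hlb y' hy') (hlip y hy y' hy')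
  have hbound : ∫ u, (√(exp (-Φ u y) / Z y) - √(exp (-Φ u y') / Z y')) ^ 2 ∂μ ≤ A * d ^ 2 :=
    calc _ ≤ I * (d ^ 2 / (2 * m)) + Z y' * ((Z y - Z y') ^ 2 / (2 * m ^ 3)) :=
          integral_sq_sqrt_exp_neg_div_sub_le hMW2 (hint y' hy') hm (hZ y hy) (hZ y' hy')
            (hlb y hy) (hlb y' hy') (hlip y hy y' hy')
      _ ≤ I * (d ^ 2 / (2 * m)) + K * ((L * d) ^ 2 / (2 * m ^ 3)) := by
          gcongr _ + ?_ * (?_ / _)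
          · exact sq_le_sq' (neg_le_of_abs_le hZL) (le_of_abs_le hZL)
      _ = A * d ^ 2 := by ring
  calc hellingerDist (bayesPosterior μ Φ y) (bayesPosterior μ Φ y')
      = √((1 / 2) * ∫ u, (√(exp (-Φ u y) / Z y) - √(exp (-Φ u y') / Z y')) ^ 2 ∂μ) :=
        hellingerDist_bayesPosterior hΦ y y'
    _ ≤ √(A / 2 * d ^ 2) := sqrt_le_sqrt (by linarith)
    _ = √(A / 2) * d := by rw [sqrt_mul (by positivity), sqrt_sq (norm_nonneg _)]
    _ ≤ (√(A / 2) + 1) * d := by nlinarith [norm_nonneg (y - y')]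

end Posterior

theorem posterior_lipschitz_in_data_hellinger
    (X Y : Type*) [NormedAddCommGroup X]
    [MeasurableSpace X] [BorelSpace X]
    [NormedAddCommGroup Y]
    (μ₀ : Measure X) [IsProbabilityMeasure μ₀]
    (X' : Set X) (hX' : μ₀ X' = 1)
    (Φ : X → Y → ℝ)
    (hΦm : ∀ y, Measurable fun u => Φ u y)
    (M₁ M₂ : ℝ → ℝ → ℝ)
    (hM₁mono : ∀ r r' a a', r ≤ r' → a ≤ a' → M₁ r a ≤ M₁ r' a')
    (hM₂mono : ∀ r r' a a', r ≤ r' → a ≤ a' → M₂ r a ≤ M₂ r' a')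
    (hM₂pos : ∀ r a, 0 < M₂ r a)
    (hlb : ∀ u ∈ X', ∀ (r : ℝ) (y : Y), ‖y‖ ≤ r → -M₁ r ‖u‖ ≤ Φ u y)
    (hlip : ∀ u ∈ X', ∀ (r : ℝ) (y₁ y₂ : Y), ‖y₁‖ ≤ r → ‖y₂‖ ≤ r →
      |Φ u y₁ - Φ u y₂| ≤ M₂ r ‖u‖ * ‖y₁ - y₂‖)
    (hint : ∀ r : ℝ, Integrable (fun u => Real.exp (M₁ r ‖u‖) * (M₂ r ‖u‖) ^ 2) μ₀)
    (Z : Y → ℝ) (hZ : Z = fun y => ∫ u, Real.exp (-Φ u y) ∂μ₀)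
    (μpost : Y → Measure X)
    (hμpost : μpost = fun y =>
      μ₀.withDensity fun u => ENNReal.ofReal (Real.exp (-Φ u y) / Z y)) :
    ∀ r > (0 : ℝ), ∃ C > (0 : ℝ), ∀ y y' : Y, ‖y‖ ≤ r → ‖y'‖ ≤ r →
      hellingerDist (μpost y) (μpost y') ≤ C * ‖y - y'‖ := by
  intro r hr
  subst hZ hμpost
  have hM₂r : Monotone (M₂ r) := fun a a' => hM₂mono r r a a' le_rfl
  have hM₁m : Measurable fun u : X => M₁ r ‖u‖ :=
    (Monotone.measurable fun a a' => hM₁mono r r a a' le_rfl).comp measurable_norm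
  have hM₂m : Measurable fun u : X => M₂ r ‖u‖ := hM₂r.measurable.comp measurable_norm
  have hM₂lb : ∀ u : X, M₂ r 0 ≤ M₂ r ‖u‖ := fun u => hM₂r (norm_nonneg u)
  have hexpM := integrable_exp_of_integrable_exp_mul_sq hM₁m (hM₂pos r 0) hM₂lb (hint r)
  have hlb' : ∀ y ∈ closedBall (0 : Y) r, ∀ᵐ u ∂μ₀, -M₁ r ‖u‖ ≤ Φ u y := fun y hy =>
    ae_of_forall_mem_of_measure_eq_one hX' (measurableSet_le hM₁m.neg (hΦm y))
      fun u hu => hlb u hu r y (mem_closedBall_zero_iff.1 hy)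
  have hlip' : ∀ y ∈ closedBall (0 : Y) r, ∀ y' ∈ closedBall (0 : Y) r,
      ∀ᵐ u ∂μ₀, |Φ u y - Φ u y'| ≤ M₂ r ‖u‖ * ‖y - y'‖ := fun y hy y' hy' =>
    ae_of_forall_mem_of_measure_eq_one hX'
      (measurableSet_le ((hΦm y).sub (hΦm y')).abs (hM₂m.mul_const _)) fun u hu =>
        hlip u hu r y y' (mem_closedBall_zero_iff.1 hy) (mem_closedBall_zero_iff.1 hy')
  obtain ⟨R, hR⟩ : ∃ R : ℕ, 0 < μ₀ (closedBall (0 : X) R) :=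
    exists_measure_pos_of_not_measure_iUnion_null (by simp [iUnion_closedBall_nat])
  obtain ⟨m, hm, hZ⟩ := exists_pos_forall_le_integral_exp_neg measurableSet_closedBall hR
    (fun y hy => integrable_exp_neg_of_ae_neg_le hexpM (hΦm y) (hlb' y hy))
    (mem_closedBall_self hr.le) subset_rfl (hM₂pos r R).le
    (fun u hu => hM₂r (mem_closedBall_zero_iff.1 hu)) hlip'
  obtain ⟨C, hC, hCy⟩ := exists_hellingerDist_bayesPosterior_le hΦm hexpM
    (integrable_exp_mul_of_integrable_exp_mul_sq hM₁m hM₂m (hM₂pos r 0) hM₂lb (hint r)) (hint r)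
    hm hZ hlb' hlip'
  exact ⟨C, hC, fun y y' hy hy' =>
    hCy y (mem_closedBall_zero_iff.2 hy) y' (mem_closedBall_zero_iff.2 hy')⟩
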